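/- BPDL is not compact: every finite subset of the set M = {⟨α*⟩φ} ∪ {¬φ} ∪ {¬⟨αⁿ⟩φ : n ∈ ℕ} is satisfiable in some standard dynamic Odintsov–Wansing model (for suitable atomic α and φ), but M itself is not satisfiable in any standard dynamic Odintsov–Wansing model. -/

import Mathlib

mutual
inductive DynProg : Type where
  | atom : ℕ → DynProg
  | seq : DynProg → DynProg → DynProg
  | union : DynProg → DynProg → DynProg
  | star : DynProg → DynProg
  | test : DynForm → DynProg
inductive DynForm : Type where
  | atom : ℕ → DynForm
  | bot  : DynForm
  | snot : DynForm → DynForm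
  | and  : DynForm → DynForm → DynForm
  | or   : DynForm → DynForm → DynForm
  | imp  : DynForm → DynForm → DynForm
  | box  : DynProg → DynForm → DynForm
  | dia  : DynProg → DynForm → DynForm
end

def DynForm.neg (φ : DynForm) : DynForm := .imp φ .bot

def DynForm.biimp (φ ψ : DynForm) : DynForm := .and (.imp φ ψ) (.imp ψ φ)

structure DynModel : Type 1 where
  S : Type
  ne : Nonempty S
  Ra : ℕ → S → S → Prop
  Vp : ℕ → S → Prop
  Vm : ℕ → S → Prop

mutual
def progRel (M : DynModel) : DynProg → M.S → M.S → Prop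
  | .atom a, x, y => M.Ra a x y
  | .seq α β, x, z => ∃ y, progRel M α x y ∧ progRel M β y z
  | .union α β, x, y => progRel M α x y ∨ progRel M β x y
  | .star α, x, y => Relation.ReflTransGen (fun u v => progRel M α u v) x y
  | .test φ, x, y => x = y ∧ dverify M x φ
def dverify (M : DynModel) : M.S → DynForm → Prop
  | x, .atom p => M.Vp p x
  | _, .bot => False
  | x, .snot φ => dfalsify M x φ
  | x, .and φ ψ => dverify M x φ ∧ dverify M x ψ
  | x, .or φ ψ => dverify M x φ ∨ dverify M x ψ
  | x, .imp φ ψ => dverify M x φ → dverify M x ψ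
  | x, .box α φ => ∀ y, progRel M α x y → dverify M y φ
  | x, .dia α φ => ∃ y, progRel M α x y ∧ dverify M y φ
def dfalsify (M : DynModel) : M.S → DynForm → Prop
  | x, .atom p => M.Vm p x
  | _, .bot => True
  | x, .snot φ => dverify M x φ
  | x, .and φ ψ => dfalsify M x φ ∨ dfalsify M x ψ
  | x, .or φ ψ => dfalsify M x φ ∧ dfalsify M x ψ
  | x, .imp φ ψ => dverify M x φ ∧ dfalsify M x ψ
  | x, .box α φ => ∃ y, progRel M α x y ∧ dfalsify M y φ
  | x, .dia α φ => ∀ y, progRel M α x y → dfalsify M y φ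
end

def validIn (M : DynModel) (φ : DynForm) : Prop := ∀ x : M.S, dverify M x φ

def DynValid (φ : DynForm) : Prop := ∀ M : DynModel, validIn M φ

def DynProg.pow (α : DynProg) : ℕ → DynProg
  | 0 => .test (DynForm.neg .bot)
  | n+1 => .seq (α.pow n) α

def badSet (α : DynProg) (φ : DynForm) : Set DynForm :=
  {DynForm.dia (.star α) φ, DynForm.neg φ} ∪
    {ψ | ∃ n : ℕ, ψ = DynForm.neg (.dia (α.pow n) φ)}

/-! `⟨α*⟩φ` is equivalent to the infinitary disjunction of the `⟨αⁿ⟩φ`, so `badSet α φ` is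
unsatisfiable, while every finite part of it omits some `¬⟨αᴺ⟩φ` with `N ≠ 0` and holds at the
root of the successor chain `0 → 1 → 2 → ⋯` in which `φ` is true only at `N`. -/

theorem DynProg.pow_injective (α : DynProg) : Function.Injective α.pow := by
  intro m n h
  induction m generalizing n with
  | zero => cases n <;> simp_all [DynProg.pow]
  | succ m ih =>
    cases n with
    | zero => simp [DynProg.pow] at h
    | succ n => simpa using ih (DynProg.seq.inj h).1

@[simp]
theorem dverify_neg (M : DynModel) (x : M.S) (φ : DynForm) :
    dverify M x φ.neg ↔ ¬ dverify M x φ := by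
  simp [DynForm.neg, dverify]

theorem progRel_star_iff_exists_pow (M : DynModel) (α : DynProg) {x y : M.S} :
    progRel M (.star α) x y ↔ ∃ n, progRel M (α.pow n) x y := by
  rw [progRel]
  constructor
  · intro h
    induction h with
    | refl => exact ⟨0, rfl, (dverify_neg _ _ _).2 id⟩
    | tail _ hstep ih =>
      obtain ⟨n, hn⟩ := ih
      exact ⟨n + 1, _, hn, hstep⟩
  · rintro ⟨n, hn⟩
    induction n generalizing y with
    | zero => exact hn.1 ▸ .refl
    | succ n ih =>
      obtain ⟨z, hxz, hzy⟩ := hn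
      exact (ih hxz).tail hzy

theorem not_satisfiable_badSet (α : DynProg) (φ : DynForm) :
    ¬ ∃ (M : DynModel) (x : M.S), ∀ ψ ∈ badSet α φ, dverify M x ψ := by
  rintro ⟨M, x, H⟩
  obtain ⟨y, hxy, hy⟩ : dverify M x (.dia (.star α) φ) := H _ (.inl (.inl rfl))
  obtain ⟨n, hn⟩ := (progRel_star_iff_exists_pow M α).1 hxy
  exact (dverify_neg M x _).1 (H _ (.inr ⟨n, rfl⟩)) ⟨y, hn, hy⟩

abbrev chainModel (N : ℕ) : DynModel where
  S := ℕ
  ne := ⟨0⟩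
  Ra _ x y := y = x + 1
  Vp _ x := x = N
  Vm _ _ := False

theorem chainModel_progRel_pow (N a n x y : ℕ) :
    progRel (chainModel N) ((DynProg.atom a).pow n) x y ↔ y = x + n := by
  induction n generalizing y with
  | zero =>
    simp only [DynProg.pow, progRel, dverify_neg, dverify, not_false_eq_true, and_true, add_zero]
    exact eq_comm
  | succ n ih =>
    simp only [DynProg.pow, progRel, ih]
    exact ⟨fun ⟨_, hz, hy⟩ => hy.trans (congrArg (· + 1) hz), fun hy => ⟨x + n, rfl, hy⟩⟩

theorem chainModel_dverify_dia_pow (N a n p : ℕ) :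
    dverify (chainModel N) (0 : ℕ) (.dia ((DynProg.atom a).pow n) (.atom p)) ↔ n = N := by
  simp only [dverify, chainModel_progRel_pow, zero_add, exists_eq_left]

theorem chainModel_dverify_of_mem_badSet {N a p : ℕ} (hN : N ≠ 0) {ψ : DynForm}
    (hψ : ψ ∈ badSet (.atom a) (.atom p))
    (hψN : ψ ≠ DynForm.neg (.dia ((DynProg.atom a).pow N) (.atom p))) :
    dverify (chainModel N) (0 : ℕ) ψ := by
  rcases hψ with (rfl | rfl) | ⟨n, rfl⟩
  · simp only [dverify, progRel_star_iff_exists_pow, chainModel_progRel_pow, zero_add]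
    exact ⟨N, ⟨N, rfl⟩, rfl⟩
  · exact (dverify_neg _ _ _).2 (Ne.symm hN)
  · refine (dverify_neg _ _ _).2 fun h => hψN ?_
    rw [(chainModel_dverify_dia_pow N a n p).1 h]

theorem finitely_satisfiable_badSet (a p : ℕ) (F : Finset DynForm)
    (hF : ↑F ⊆ badSet (.atom a) (.atom p)) :
    ∃ (M : DynModel) (x : M.S), ∀ ψ ∈ F, dverify M x ψ := by
  let f : ℕ → DynForm := fun n => .neg (.dia ((DynProg.atom a).pow n) (.atom p))
  have hf : Function.Injective f := fun m n h => by
    simp only [f, DynForm.neg, DynForm.imp.injEq, DynForm.dia.injEq] at h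
    exact DynProg.pow_injective _ h.1.1
  obtain ⟨N, hN⟩ := Infinite.exists_notMem_finset (insert 0 (F.preimage f hf.injOn))
  simp only [Finset.mem_insert, Finset.mem_preimage, not_or] at hN
  exact ⟨chainModel N, (0 : ℕ), fun ψ hψ =>
    chainModel_dverify_of_mem_badSet hN.1 (hF hψ) fun h => hN.2 (by rwa [h] at hψ)⟩

theorem stmt15 (α : DynProg) (φ : DynForm) (hα : ∃ a, α = .atom a)
    (hφ : ∃ p, φ = .atom p) :
    (∀ F : Finset DynForm, ↑F ⊆ badSet α φ →
        ∃ (M : DynModel) (x : M.S), ∀ ψ ∈ F, dverify M x ψ) ∧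
    ¬ ∃ (M : DynModel) (x : M.S), ∀ ψ ∈ badSet α φ, dverify M x ψ := by
  obtain ⟨a, rfl⟩ := hα
  obtain ⟨p, rfl⟩ := hφ
  exact ⟨finitely_satisfiable_badSet a p, not_satisfiable_badSet _ _⟩
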